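/- Deletion-to-edit-distance conversion for Text-CRS: if x' is obtained from an n-token sequence x by deleting l ≤ r tokens (with remaining tokens shifted forward and padding appended at the end), then the word-position displacement of the induced permutation is at most max_{l' ∈ {0,…,r}} 2l'(n−l'), which equals 2r(n−r) if n ≥ 2r and is at most n²/2 if n < 2r. -/

import Mathlib

/-!
Since `σ` is a permutation, `∑ (i - σ i) = 0`, so the displacement is twice the total forward
movement `∑_{i < σ i} (σ i - i)`. Survivors never move forward, so at most `l ≤ r` tokens do, and
`k` tokens moving forward gain at most `k (n - k)`: their targets sum to at most the top `k`
positions and their sources to at least the bottom `k`. Finally `k (n - k)` is increasing for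
`k ≤ n / 2` and never exceeds `n² / 4`.
-/

open Finset

theorem Finset.card_mul_card_sub_one_le_two_mul_sum (s : Finset ℕ) :
    (#s : ℤ) * (#s - 1) ≤ 2 * ∑ i ∈ s, (i : ℤ) := by
  induction s using Finset.induction_on_max with
  | empty => simp
  | insert a s ha ih =>
    have ha' : a ∉ s := fun h => (ha a h).false
    have hcard : #s ≤ a := by simpa using card_le_card fun x hx => mem_range.2 (ha x hx)
    rw [card_insert_of_notMem ha', sum_insert ha']
    push_cast
    linarith [(Nat.cast_le (α := ℤ)).2 hcard]

theorem Fin.card_mul_card_sub_one_le_two_mul_sum {n : ℕ} (s : Finset (Fin n)) :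
    (#s : ℤ) * (#s - 1) ≤ 2 * ∑ i ∈ s, (i : ℤ) := by
  simpa using (s.map Fin.valEmbedding).card_mul_card_sub_one_le_two_mul_sum

theorem Fin.sum_val_sub_sum_val_le {n : ℕ} (s t : Finset (Fin n)) (hst : #t = #s) :
    ∑ j ∈ t, (j : ℤ) - ∑ i ∈ s, (i : ℤ) ≤ #s * (n - #s) := by
  have hs := Fin.card_mul_card_sub_one_le_two_mul_sum s
  have ht := Fin.card_mul_card_sub_one_le_two_mul_sum (t.map Fin.revPerm.toEmbedding)
  have hrev : ∑ j ∈ t, ((Fin.rev j : ℕ) : ℤ) = ∑ j ∈ t, ((n - 1 : ℤ) - j) :=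
    sum_congr rfl fun j _ => by rw [Fin.val_rev]; omega
  rw [card_map, sum_map, hst] at ht
  simp only [Equiv.coe_toEmbedding, Fin.revPerm_apply] at ht
  rw [hrev, sum_sub_distrib, Finset.sum_const, hst, nsmul_eq_mul] at ht
  linarith

theorem Equiv.Perm.sum_abs_sub_eq_two_mul_sum {α R : Type*} [Fintype α] [CommRing R]
    [LinearOrder R] [IsStrictOrderedRing R] (σ : Equiv.Perm α) (f : α → R) :
    ∑ i, |f i - f (σ i)| = 2 * ∑ i ∈ univ.filter (fun i => f i < f (σ i)), (f (σ i) - f i) := by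
  have hbal : ∑ i, (f i - f (σ i)) = 0 := by
    rw [sum_sub_distrib, Equiv.sum_comp σ f, sub_self]
  have habs : ∀ i, |f i - f (σ i)| =
      2 * (if f i < f (σ i) then f (σ i) - f i else 0) + (f i - f (σ i)) := by
    intro i
    split_ifs with h
    · rw [abs_of_neg (sub_neg.2 h)]; ring
    · rw [abs_of_nonneg (sub_nonneg.2 (not_lt.1 h))]; ring
  simp_rw [habs, sum_add_distrib, hbal, add_zero, ← mul_sum, sum_filter]

theorem Equiv.Perm.sum_natAbs_sub_le {n : ℕ} (σ : Equiv.Perm (Fin n)) :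
    ∑ i : Fin n, ((i : ℤ) - ((σ i : ℕ) : ℤ)).natAbs ≤
      2 * #{i | i < σ i} * (n - #{i | i < σ i}) := by
  set A : Finset (Fin n) := {i | i < σ i}
  have hAn : #A ≤ n := (card_le_univ A).trans (Fintype.card_fin n).le
  have hA : univ.filter (fun i : Fin n => ((i : ℕ) : ℤ) < ((σ i : ℕ) : ℤ)) = A := by
    simp [A]
  zify [hAn]
  rw [σ.sum_abs_sub_eq_two_mul_sum fun i => ((i : ℕ) : ℤ), hA, sum_sub_distrib, mul_assoc]
  have h := Fin.sum_val_sub_sum_val_le A (A.map σ.toEmbedding) (card_map _)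
  rw [sum_map] at h
  exact mul_le_mul_of_nonneg_left h two_pos.le

theorem stmt_15_general (n l r : ℕ) (hl : l ≤ r) (σ : Equiv.Perm (Fin n))
    (D : Finset (Fin n)) (hD : D.card = l)
    (hsurv : ∀ i : Fin n, i ∉ D →
      ((σ i : ℕ)) = (i : ℕ) - (D.filter (fun j : Fin n => (j : ℕ) < (i : ℕ))).card) :
    ((∑ i : Fin n, ((i : ℤ) - ((σ i : ℕ) : ℤ)).natAbs : ℕ) : ℝ)
      ≤ if 2 * r ≤ n then ((2 * r * (n - r) : ℕ) : ℝ) else (n : ℝ) ^ 2 / 2 := by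
  refine (Nat.cast_le.2 σ.sum_natAbs_sub_le).trans ?_
  set k := #{i | i < σ i}
  have hkD : ({i | i < σ i} : Finset (Fin n)) ⊆ D := fun i hi => by
    by_contra hiD
    have := hsurv i hiD
    simp only [mem_filter, mem_univ, true_and, Fin.lt_def] at hi
    omega
  have hkr : (k : ℝ) ≤ r := by exact_mod_cast (card_le_card hkD).trans (hD ▸ hl)
  have hkn : k ≤ n := (card_le_univ _).trans (Fintype.card_fin n).le
  push_cast [Nat.cast_sub hkn]
  split_ifs with h
  · have h' : 2 * (r : ℝ) ≤ n := by exact_mod_cast h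
    push_cast [Nat.cast_sub (by omega : r ≤ n)]
    nlinarith [mul_nonneg (sub_nonneg.2 hkr) (by linarith : (0 : ℝ) ≤ n - r - k)]
  · nlinarith [sq_nonneg ((n : ℝ) - 2 * k)]

/-- Deletion-to-edit-distance conversion for Text-CRS.  Deleting `l ≤ r` tokens from an
`n`-token sequence induces a permutation `σ` which shifts each surviving token `i` forward by
the number of deleted tokens before it and sends deleted tokens to the trailing `l` positions.
The total word-position displacement `Σ_i |i − σ(i)|` is at most
`max_{l' ≤ r} 2l'(n−l')`, which equals `2r(n−r)` if `n ≥ 2r` and is at most `n²/2` otherwise. -/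
theorem stmt_15 (n l r : ℕ) (hl : l ≤ r) (σ : Equiv.Perm (Fin n))
    (D : Finset (Fin n)) (hD : D.card = l)
    (hsurv : ∀ i : Fin n, i ∉ D →
      ((σ i : ℕ)) = (i : ℕ) - (D.filter (fun j : Fin n => (j : ℕ) < (i : ℕ))).card)
    (hdel : ∀ i ∈ D, n - l ≤ (σ i : ℕ)) :
    ((∑ i : Fin n, ((i : ℤ) - ((σ i : ℕ) : ℤ)).natAbs : ℕ) : ℝ)
      ≤ if 2 * r ≤ n then ((2 * r * (n - r) : ℕ) : ℝ) else (n : ℝ) ^ 2 / 2 :=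
  stmt_15_general n l r hl σ D hD hsurv
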